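/- Fix vectors c_f ∈ ℂ^m, ŷ_f ∈ ℂ^ρ, scalars σ_f ∈ ℝ, and Hermitian positive semidefinite Σ̂_f ∈ ℂ^{ρ×ρ}, for f = 1,…,F. Suppose S := Σ_f σ_f² (Σ̂_f + ŷ_f ŷ_fᴴ) is invertible. Then the function g(W) = Σ_f [ 2 Re(c_fᴴ σ_f W ŷ_f) − σ_f² Tr(Wᴴ W (Σ̂_f + ŷ_f ŷ_fᴴ)) ] over W ∈ ℂ^{m×ρ} attains its unique maximum at W* = (Σ_f σ_f c_f ŷ_fᴴ) S^{-1}. -/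

import Mathlib

/-!
`S` is a positive semidefinite sum that is invertible, hence positive definite. Rewriting the
linear terms as traces, `g W = 2 Re Tr(Bᴴ W) - Re Tr(Wᴴ W S)` with `B = W* S`, and completing the
square gives `g W* - g W = Re Tr(D S Dᴴ)` for `D = W - W*`. This trace is the sum over the rows `d`
of `D` of `d S dᴴ`, which is positive as soon as `D ≠ 0`.
-/

open Matrix
open scoped ComplexOrder

namespace Matrix

variable {R 𝕜 m n : Type*} [Fintype m] [Fintype n]

theorem trace_conjTranspose_vecMulVec_mul [CommSemiring R] [StarRing R]
    (c : m → R) (y : n → R) (W : Matrix m n R) :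
    ((vecMulVec c (star y))ᴴ * W).trace = star c ⬝ᵥ W *ᵥ y := by
  rw [conjTranspose_vecMulVec, star_star, vecMulVec_mul, trace_vecMulVec, dotProduct_comm,
    dotProduct_mulVec]

theorem trace_mul_mul_conjTranspose_eq_sum [NonUnitalSemiring R] [StarRing R]
    (D : Matrix m n R) (S : Matrix n n R) :
    (D * S * Dᴴ).trace = ∑ i, D i ⬝ᵥ S *ᵥ star (D i) := by
  refine Finset.sum_congr rfl fun i _ => ?_
  simp only [diag_apply, mul_apply, dotProduct, mulVec, conjTranspose_apply, Pi.star_apply,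
    Finset.sum_mul, Finset.mul_sum, mul_assoc]
  exact Finset.sum_comm

variable [RCLike 𝕜]

open RCLike

theorem PosDef.trace_mul_mul_conjTranspose_pos {S : Matrix n n 𝕜} (hS : S.PosDef)
    {D : Matrix m n 𝕜} (hD : D ≠ 0) : 0 < (D * S * Dᴴ).trace := by
  obtain ⟨i, hi⟩ : ∃ i, D i ≠ 0 := by
    by_contra! h
    exact hD (funext h)
  rw [trace_mul_mul_conjTranspose_eq_sum]
  refine Finset.sum_pos' (fun j _ => ?_) ⟨i, Finset.mem_univ i, ?_⟩
  · simpa using hS.posSemidef.dotProduct_mulVec_nonneg (star (D j))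
  · simpa using hS.dotProduct_mulVec_pos (star_ne_zero.mpr hi)

def traceQuadratic (B : Matrix m n 𝕜) (S : Matrix n n 𝕜) (W : Matrix m n 𝕜) : ℝ :=
  2 * re (Bᴴ * W).trace - re (Wᴴ * W * S).trace

theorem traceQuadratic_sum {ι : Type*} (s : Finset ι) (σ : ι → ℝ) (c : ι → m → 𝕜)
    (y : ι → n → 𝕜) (A : ι → Matrix n n 𝕜) (W : Matrix m n 𝕜) :
    traceQuadratic (∑ i ∈ s, σ i • vecMulVec (c i) (star (y i))) (∑ i ∈ s, σ i ^ 2 • A i) W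
      = ∑ i ∈ s, (2 * re (star (c i) ⬝ᵥ (σ i • W) *ᵥ y i) - σ i ^ 2 * re (Wᴴ * W * A i).trace) := by
  simp only [traceQuadratic, conjTranspose_sum, Matrix.sum_mul, trace_sum, map_sum,
    Finset.mul_sum, ← Finset.sum_sub_distrib, conjTranspose_smul, star_trivial, Matrix.smul_mul,
    Matrix.mul_smul, trace_smul, smul_mulVec, dotProduct_smul, trace_conjTranspose_vecMulVec_mul,
    smul_re]

theorem traceQuadratic_sub_traceQuadratic {S : Matrix n n 𝕜} (hS : S.IsHermitian)
    (W₀ W : Matrix m n 𝕜) :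
    traceQuadratic (W₀ * S) S W₀ - traceQuadratic (W₀ * S) S W
      = re ((W - W₀)ᴴ * (W - W₀) * S).trace := by
  have hlinear (X : Matrix m n 𝕜) : ((W₀ * S)ᴴ * X).trace = (W₀ᴴ * X * S).trace := by
    rw [conjTranspose_mul, hS.eq, Matrix.mul_assoc, trace_mul_comm, Matrix.mul_assoc]
  have hcross : re (Wᴴ * W₀ * S).trace = re (W₀ᴴ * W * S).trace := by
    rw [← conj_re, starRingEnd_apply, ← trace_conjTranspose, conjTranspose_mul, conjTranspose_mul,
      conjTranspose_conjTranspose, hS.eq, trace_mul_comm]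
  simp only [traceQuadratic, hlinear, conjTranspose_sub, Matrix.sub_mul, Matrix.mul_sub, trace_sub,
    map_sub, hcross]
  ring

theorem PosDef.traceQuadratic_lt_of_ne {S : Matrix n n 𝕜} (hS : S.PosDef)
    {W₀ W : Matrix m n 𝕜} (hW : W ≠ W₀) :
    traceQuadratic (W₀ * S) S W < traceQuadratic (W₀ * S) S W₀ := by
  have hpos := hS.trace_mul_mul_conjTranspose_pos (sub_ne_zero.mpr hW)
  rw [trace_mul_cycle] at hpos
  linarith [(pos_iff.mp hpos).1, traceQuadratic_sub_traceQuadratic hS.isHermitian W₀ W]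

end Matrix

/-- M-step update of the RFI structure matrix W: the concave quadratic
g(W) = Σ_f [2 Re(c_fᴴ σ_f W ŷ_f) − σ_f² Tr(Wᴴ W (Σ̂_f + ŷ_f ŷ_fᴴ))] attains its
unique maximum at W* = (Σ_f σ_f c_f ŷ_fᴴ) S⁻¹ with
S = Σ_f σ_f² (Σ̂_f + ŷ_f ŷ_fᴴ). -/
theorem W_update_unique_maximizer (F m ρ : ℕ)
    (c : Fin F → Fin m → ℂ) (yhat : Fin F → Fin ρ → ℂ)
    (σf : Fin F → ℝ)
    (Shat : Fin F → Matrix (Fin ρ) (Fin ρ) ℂ)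
    (hShat : ∀ f, (Shat f).PosSemidef)
    (S : Matrix (Fin ρ) (Fin ρ) ℂ)
    (hS : S = ∑ f, (σf f ^ 2) • (Shat f + vecMulVec (yhat f) (star (yhat f))))
    (hSinv : IsUnit S.det)
    (g : Matrix (Fin m) (Fin ρ) ℂ → ℝ)
    (hg : ∀ W, g W = ∑ f,
      (2 * (star (c f) ⬝ᵥ (σf f • W).mulVec (yhat f)).re -
        σf f ^ 2 * (Wᴴ * W * (Shat f + vecMulVec (yhat f) (star (yhat f)))).trace.re))
    (Wstar : Matrix (Fin m) (Fin ρ) ℂ)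
    (hWstar : Wstar = (∑ f, σf f • vecMulVec (c f) (star (yhat f))) * S⁻¹) :
    (∀ W, g W ≤ g Wstar) ∧ (∀ W, g W = g Wstar → W = Wstar) := by
  have hSpd : S.PosDef := by
    refine PosSemidef.posDef_iff_isUnit ?_ |>.mpr ((isUnit_iff_isUnit_det S).mpr hSinv)
    exact hS ▸ posSemidef_sum _ fun f _ =>
      ((hShat f).add (posSemidef_vecMulVec_self_star _)).smul (sq_nonneg _)
  have hg' (W : Matrix (Fin m) (Fin ρ) ℂ) : g W = traceQuadratic (Wstar * S) S W := by
    rw [hWstar, Matrix.mul_assoc, nonsing_inv_mul S hSinv, Matrix.mul_one, hS, traceQuadratic_sum,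
      hg]
    simp only [RCLike.re_to_complex]
  refine ⟨fun W => ?_, fun W hW => ?_⟩
  · rcases eq_or_ne W Wstar with rfl | hne
    · exact le_rfl
    · simpa only [hg'] using (hSpd.traceQuadratic_lt_of_ne hne).le
  · by_contra hne
    exact (hSpd.traceQuadratic_lt_of_ne hne).ne (by simpa only [hg'] using hW)
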